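/- arXiv:1808.06312 — 3 statements merged into one kernel-verified Lean document; each statement's English description precedes it below -/
import Mathlib

section
/- Let u : ℝⁿ × [0,∞) → ℝ satisfy: (i) 0 ≤ u(x,t) ≤ M·t for all (x,t); (ii) |u(x,t)−u(y,t)| ≤ ω(|x−y|) for a modulus of continuity ω; (iii) |u(x,t)−u(x,s)| ≤ C|t−s|; (iv) for each t > 0, sup over ℝⁿ×[0,t] of u is attained at some point (x_t,s_t) with |x_t| ≤ R₀. If m(t) := sup_x u(x,t) satisfies m(t)/t → c > 0 as t → ∞, then for every x ∈ ℝⁿ, u(x,t)/t → c as t → ∞. -/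
/-!
Bound `u(x,t)` above by `m(t)`. For the lower bound, let `(x_t, s_t)` be a maximiser of `u` on
`ℝⁿ × [0,t]`. Then `m(t) ≤ u(x_t, s_t) ≤ m(s_t) ≤ M s_t`, so `s_t → ∞`, and comparing
`m(t) ≈ c t` with `m(s_t) ≈ c s_t` gives `s_t / t → 1`. Moving from `(x_t, s_t)` to `(x, s_t)`
costs at most `ω(|x| + R₀)`, and from `(x, s_t)` to `(x, t)` at most `C (t - s_t) = o(t)`, so
`u(x,t) ≥ m(t) - o(t)`.
-/

open Filter Topology

section AsymptoticSpeed

variable {m : ℝ → ℝ} {c : ℝ}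

lemma tendsto_atTop_of_tendsto_div_self (hc : 0 < c)
    (hlim : Tendsto (fun t => m t / t) atTop (𝓝 c)) : Tendsto m atTop atTop := by
  refine (hlim.pos_mul_atTop hc tendsto_id).congr' ?_
  filter_upwards [eventually_ne_atTop 0] with t ht
  exact div_mul_cancel₀ (m t) ht

lemma tendsto_div_self_of_le_comp (hc : 0 < c)
    (hlim : Tendsto (fun t => m t / t) atTop (𝓝 c)) {s : ℝ → ℝ}
    (hs : Tendsto s atTop atTop) (hs_le : ∀ᶠ t in atTop, s t ≤ t)
    (hms : ∀ᶠ t in atTop, m t ≤ m (s t)) : Tendsto (fun t => s t / t) atTop (𝓝 1) := by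
  have hlim_s : Tendsto (fun t => m (s t) / s t) atTop (𝓝 c) := hlim.comp hs
  have hratio : Tendsto (fun t => (m t / t) / (m (s t) / s t)) atTop (𝓝 1) := by
    have h := hlim.div hlim_s hc.ne'
    rwa [div_self hc.ne'] at h
  refine tendsto_of_tendsto_of_tendsto_of_le_of_le' hratio tendsto_const_nhds ?_ ?_
  · filter_upwards [hms, eventually_gt_atTop 0, hs.eventually_gt_atTop 0,
      hlim_s.eventually (eventually_gt_nhds hc)] with t hmt ht hst hpos
    rw [div_le_iff₀ hpos, div_mul_div_comm, mul_comm t, mul_div_mul_left _ _ hst.ne']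
    exact div_le_div_of_nonneg_right hmt ht.le
  · filter_upwards [hs_le, eventually_gt_atTop 0] with t hst ht
    exact (div_le_one ht).2 hst

end AsymptoticSpeed

section Maximiser

variable {E : Type*} {u : E → ℝ → ℝ} {m ω : ℝ → ℝ} {C R₀ : ℝ}

lemma le_of_isLUB_of_le_maximiser {xt : E} {s t : ℝ} (ht : 0 ≤ t)
    (hm : IsLUB (Set.range fun x => u x t) (m t))
    (hmax : ∀ y τ, τ ∈ Set.Icc (0 : ℝ) t → u y τ ≤ u xt s) : m t ≤ u xt s :=
  hm.2 <| Set.forall_mem_range.2 fun y => hmax y t ⟨ht, le_rfl⟩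

variable [SeminormedAddCommGroup E]

lemma sub_sub_le_of_le_maximiser (hω_mono : Monotone ω)
    (hspace : ∀ x y t, 0 ≤ t → |u x t - u y t| ≤ ω ‖x - y‖)
    (htime : ∀ x s t, 0 ≤ s → 0 ≤ t → |u x t - u x s| ≤ C * |t - s|)
    (x : E) {xt : E} {s t : ℝ} (hxt : ‖xt‖ ≤ R₀) (hs : s ∈ Set.Icc 0 t) (hmt : m t ≤ u xt s) :
    m t - ω (‖x‖ + R₀) - C * (t - s) ≤ u x t := by
  have hdist : ω ‖xt - x‖ ≤ ω (‖x‖ + R₀) :=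
    hω_mono <| (norm_sub_le xt x).trans (by linarith)
  have hspace' := (abs_le.1 (hspace xt x s hs.1)).2
  have htime' := (abs_le.1 (htime x s t hs.1 (hs.1.trans hs.2))).1
  rw [abs_of_nonneg (sub_nonneg.2 hs.2)] at htime'
  linarith

end Maximiser

theorem stmt_3_general {n : ℕ} (u : EuclideanSpace ℝ (Fin n) → ℝ → ℝ)
    (M C R₀ c : ℝ) (ω : ℝ → ℝ) (m : ℝ → ℝ)
    (hM : 0 < M) (hc : 0 < c)
    (hω_mono : Monotone ω)
    (hbound : ∀ x t, 0 ≤ t → 0 ≤ u x t ∧ u x t ≤ M * t)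
    (hspace : ∀ x y t, 0 ≤ t → |u x t - u y t| ≤ ω ‖x - y‖)
    (htime : ∀ x s t, 0 ≤ s → 0 ≤ t → |u x t - u x s| ≤ C * |t - s|)
    (hmax : ∀ t, 0 < t → ∃ x_t s_t, ‖x_t‖ ≤ R₀ ∧ s_t ∈ Set.Icc (0 : ℝ) t ∧
      ∀ y τ, τ ∈ Set.Icc (0 : ℝ) t → u y τ ≤ u x_t s_t)
    (hm : ∀ t, 0 ≤ t → IsLUB (Set.range fun x => u x t) (m t))
    (hlim : Filter.Tendsto (fun t => m t / t) Filter.atTop (nhds c)) :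
    ∀ x, Filter.Tendsto (fun t => u x t / t) Filter.atTop (nhds c) := by
  intro x
  choose! xt st hxt hst hmaxt using hmax
  have hmt_le : ∀ t, 0 < t → m t ≤ u (xt t) (st t) := fun t ht =>
    le_of_isLUB_of_le_maximiser ht.le (hm t ht.le) (hmaxt t ht)
  have hm_le_comp : ∀ t, 0 < t → m t ≤ m (st t) := fun t ht =>
    (hmt_le t ht).trans <| (hm _ (hst t ht).1).1 ⟨xt t, rfl⟩
  have hst_atTop : Tendsto st atTop atTop := by
    refine tendsto_atTop_mono' _ ?_ ((tendsto_atTop_of_tendsto_div_self hc hlim).atTop_div_const hM)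
    filter_upwards [eventually_gt_atTop 0] with t ht
    rw [div_le_iff₀' hM]
    exact (hm_le_comp t ht).trans <| (hm _ (hst t ht).1).2 <|
      Set.forall_mem_range.2 fun y => (hbound y _ (hst t ht).1).2
  have hst_ratio : Tendsto (fun t => st t / t) atTop (𝓝 1) :=
    tendsto_div_self_of_le_comp hc hlim hst_atTop
      ((eventually_gt_atTop 0).mono fun t ht => (hst t ht).2)
      ((eventually_gt_atTop 0).mono hm_le_comp)
  have hlower : Tendsto (fun t => m t / t - ω (‖x‖ + R₀) / t - C * (1 - st t / t))
      atTop (𝓝 c) := by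
    simpa using (hlim.sub ((tendsto_const_nhds (x := ω (‖x‖ + R₀))).div_atTop tendsto_id)).sub
      (((tendsto_const_nhds (x := (1 : ℝ))).sub hst_ratio).const_mul C)
  refine tendsto_of_tendsto_of_tendsto_of_le_of_le' hlower hlim ?_ ?_
  · filter_upwards [eventually_gt_atTop 0] with t ht
    have h := sub_sub_le_of_le_maximiser hω_mono hspace htime x (hxt t ht) (hst t ht)
      (hmt_le t ht)
    calc m t / t - ω (‖x‖ + R₀) / t - C * (1 - st t / t)
        = (m t - ω (‖x‖ + R₀) - C * (t - st t)) / t := by field_simp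
      _ ≤ u x t / t := div_le_div_of_nonneg_right h ht.le
  · filter_upwards [eventually_gt_atTop 0] with t ht
    exact div_le_div_of_nonneg_right ((hm t ht.le).1 ⟨x, rfl⟩) ht.le

/-- If a nonnegative function `u` with linear growth, a spatial modulus of continuity,
a time Lipschitz bound, and suprema attained in a fixed ball satisfies
`m(t)/t → c > 0` for `m(t) = sup_x u(x,t)`, then `u(x,t)/t → c` for every `x`. -/
theorem stmt_3 {n : ℕ} (u : EuclideanSpace ℝ (Fin n) → ℝ → ℝ)
    (M C R₀ c : ℝ) (ω : ℝ → ℝ) (m : ℝ → ℝ)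
    (hM : 0 < M) (hC : 0 < C) (hR₀ : 0 < R₀) (hc : 0 < c)
    (hω_cont : Continuous ω) (hω_mono : Monotone ω) (hω0 : ω 0 = 0)
    (hω_nonneg : ∀ r, 0 ≤ r → 0 ≤ ω r)
    (hbound : ∀ x t, 0 ≤ t → 0 ≤ u x t ∧ u x t ≤ M * t)
    (hspace : ∀ x y t, 0 ≤ t → |u x t - u y t| ≤ ω ‖x - y‖)
    (htime : ∀ x s t, 0 ≤ s → 0 ≤ t → |u x t - u x s| ≤ C * |t - s|)
    (hmax : ∀ t, 0 < t → ∃ x_t s_t, ‖x_t‖ ≤ R₀ ∧ s_t ∈ Set.Icc (0 : ℝ) t ∧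
      ∀ y τ, τ ∈ Set.Icc (0 : ℝ) t → u y τ ≤ u x_t s_t)
    (hm : ∀ t, 0 ≤ t → IsLUB (Set.range fun x => u x t) (m t))
    (hlim : Filter.Tendsto (fun t => m t / t) Filter.atTop (nhds c)) :
    ∀ x, Filter.Tendsto (fun t => u x t / t) Filter.atTop (nhds c) :=
  stmt_3_general u M C R₀ c ω m hM hc hω_mono hbound hspace htime hmax hm hlim
end

section
/- Let n ≥ 2, f̃ : [0,∞) → [0,∞) continuous with compact support, r̄₀ ≥ n−1 a maximum point of f̃ on [n−1,∞), and r₀ > r̄₀. For r > r₀ and t > T₁ := r₀(r−r₀)/(r₀−(n−1)), the curve γ which equals r₀ on [0, t−T₁] and then moves outward with speed (r₀−(n−1))/r₀ to reach r at time t is admissible (satisfies |γ' + (n−1)/γ| ≤ 1) and gives ∫₀ᵗ f̃(γ(s)) ds ≥ f̃(r₀)(t − T₁). -/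
/-!
The curve holds still at `r₀` and then moves outward with the constant speed
`c = (r₀ - (n - 1)) / r₀`, which makes `γ' + (n - 1) / γ` equal to `1` at `γ = r₀`; since
`γ ≥ r₀` afterwards, `γ' + (n - 1) / γ` stays in `[0, 1]`. The waiting time `t - T₁` is
chosen so that the outgoing piece, of length `T₁ = (r - r₀) / c`, ends at `r`. The integral
bound only uses the waiting phase, where the integrand is the constant `f̃(r₀)`, and
`f̃ ≥ 0` elsewhere.
-/

open MeasureTheory Set

noncomputable def holdThenRamp (r₀ a c s : ℝ) : ℝ :=
  if s ≤ a then r₀ else r₀ + (s - a) * c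

namespace holdThenRamp

variable {r₀ a c s : ℝ}

theorem of_le (h : s ≤ a) : holdThenRamp r₀ a c s = r₀ := if_pos h

theorem of_gt (h : a < s) : holdThenRamp r₀ a c s = r₀ + (s - a) * c := if_neg h.not_ge

theorem eq_max (r₀ a c : ℝ) :
    holdThenRamp r₀ a c = fun s => r₀ + max (s - a) 0 * c := by
  funext s
  rcases le_or_gt s a with h | h
  · rw [of_le h, max_eq_right (by linarith), zero_mul, add_zero]
  · rw [of_gt h, max_eq_left (by linarith)]

theorem continuous (r₀ a c : ℝ) : Continuous (holdThenRamp r₀ a c) := by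
  rw [eq_max]
  fun_prop

theorem start_le (hc : 0 ≤ c) (s : ℝ) : r₀ ≤ holdThenRamp r₀ a c s := by
  rw [eq_max]
  exact le_add_of_nonneg_right (mul_nonneg (le_max_right _ _) hc)

theorem hasDerivAt_of_lt (h : s < a) : HasDerivAt (holdThenRamp r₀ a c) 0 s :=
  (hasDerivAt_const s r₀).congr_of_eventuallyEq <|
    Filter.eventually_of_mem (Iio_mem_nhds h) fun _ hx => of_le (le_of_lt hx)

theorem hasDerivAt_of_gt (h : a < s) : HasDerivAt (holdThenRamp r₀ a c) c s := by
  have hlin : HasDerivAt (fun x => r₀ + (x - a) * c) c s := by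
    simpa using (((hasDerivAt_id s).sub_const a).mul_const c).const_add r₀
  exact hlin.congr_of_eventuallyEq <| Filter.eventually_of_mem (Ioi_mem_nhds h) fun _ hx => of_gt hx

theorem exists_hasDerivAt_abs_add_div_le_one {m : ℝ} (hm : 0 ≤ m) (hmr : m < r₀)
    (hs : s ≠ a) :
    ∃ d, HasDerivAt (holdThenRamp r₀ a ((r₀ - m) / r₀)) d s ∧
      |d + m / holdThenRamp r₀ a ((r₀ - m) / r₀) s| ≤ 1 := by
  have hr₀ : 0 < r₀ := hm.trans_lt hmr
  rcases hs.lt_or_gt with h | h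
  · refine ⟨0, hasDerivAt_of_lt h, ?_⟩
    rw [of_le h.le, zero_add, abs_of_nonneg (div_nonneg hm hr₀.le), div_le_one hr₀]
    exact hmr.le
  · refine ⟨(r₀ - m) / r₀, hasDerivAt_of_gt h, ?_⟩
    have hc : 0 ≤ (r₀ - m) / r₀ := div_nonneg (sub_nonneg.2 hmr.le) hr₀.le
    have hγ := start_le (r₀ := r₀) (a := a) hc s
    have hdiv : m / holdThenRamp r₀ a ((r₀ - m) / r₀) s ≤ m / r₀ :=
      div_le_div_of_nonneg_left hm hr₀ hγ
    have hsum : (r₀ - m) / r₀ + m / r₀ = 1 := by field_simp; ring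
    rw [abs_of_nonneg (add_nonneg hc (div_nonneg hm (hr₀.trans_le hγ).le))]
    linarith

end holdThenRamp

theorem mul_le_intervalIntegral_of_eqOn_const {g : ℝ → ℝ} (hg : Continuous g) {a t C : ℝ}
    (ha : 0 ≤ a) (hat : a ≤ t) (hconst : EqOn g (fun _ => C) (Icc 0 a))
    (hnonneg : ∀ s ∈ Icc a t, 0 ≤ g s) :
    C * a ≤ ∫ s in (0 : ℝ)..t, g s := by
  have hsplit := intervalIntegral.integral_add_adjacent_intervals
    (hg.intervalIntegrable (μ := volume) 0 a) (hg.intervalIntegrable a t)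
  have hhold : ∫ s in (0 : ℝ)..a, g s = C * a := by
    rw [intervalIntegral.integral_congr (by rwa [uIcc_of_le ha]),
      intervalIntegral.integral_const, smul_eq_mul, sub_zero, mul_comm]
  have hramp : 0 ≤ ∫ s in a..t, g s := intervalIntegral.integral_nonneg hat hnonneg
  linarith

open MeasureTheory in
theorem stmt_12_general (n : ℕ) (hn : 2 ≤ n) (ftil : ℝ → ℝ)
    (hf : Continuous ftil) (hnn : ∀ ρ, 0 ≤ ftil ρ)
    (rbar₀ r₀ r t : ℝ)
    (hrbar : (n : ℝ) - 1 ≤ rbar₀)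
    (hr₀ : rbar₀ < r₀) (hr : r₀ < r)
    (ht : r₀ * (r - r₀) / (r₀ - ((n : ℝ) - 1)) < t) :
    let T₁ := r₀ * (r - r₀) / (r₀ - ((n : ℝ) - 1))
    let γ : ℝ → ℝ := fun s =>
      if s ≤ t - T₁ then r₀ else r₀ + (s - (t - T₁)) * ((r₀ - ((n : ℝ) - 1)) / r₀)
    γ t = r ∧ (∀ s ∈ Set.Icc 0 t, 0 < γ s) ∧ ContinuousOn γ (Set.Icc 0 t) ∧
    (∀ᵐ s ∂(volume.restrict (Set.Icc 0 t)),
      ∃ d, HasDerivAt γ d s ∧ |d + ((n : ℝ) - 1) / γ s| ≤ 1) ∧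
    ftil r₀ * (t - T₁) ≤ ∫ s in (0:ℝ)..t, ftil (γ s) := by
  intro T₁ γ
  have hm : 0 ≤ (n : ℝ) - 1 := by
    have : (2 : ℝ) ≤ n := by exact_mod_cast hn
    linarith
  have hmr : (n : ℝ) - 1 < r₀ := hrbar.trans_lt hr₀
  have hr₀pos : 0 < r₀ := hm.trans_lt hmr
  have hc : 0 ≤ (r₀ - ((n : ℝ) - 1)) / r₀ := div_nonneg (sub_nonneg.2 hmr.le) hr₀pos.le
  have hT₁ : 0 < T₁ := div_pos (mul_pos hr₀pos (sub_pos.2 hr)) (sub_pos.2 hmr)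
  have hγ : γ = holdThenRamp r₀ (t - T₁) ((r₀ - ((n : ℝ) - 1)) / r₀) := rfl
  rw [hγ]
  refine ⟨?_, fun s _ => hr₀pos.trans_le (holdThenRamp.start_le hc s),
    (holdThenRamp.continuous _ _ _).continuousOn, ?_, ?_⟩
  · have hT₁c : T₁ * ((r₀ - ((n : ℝ) - 1)) / r₀) = r - r₀ := by
      simp only [T₁]
      field_simp [(sub_pos.2 hmr).ne']
    rw [holdThenRamp.of_gt (by linarith), sub_sub_cancel, hT₁c, add_sub_cancel]
  · exact ae_restrict_of_ae <| (volume.ae_ne (t - T₁)).mono fun s hs =>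
      holdThenRamp.exists_hasDerivAt_abs_add_div_le_one hm hmr hs
  · exact mul_le_intervalIntegral_of_eqOn_const (hf.comp (holdThenRamp.continuous _ _ _))
      (by linarith) (by linarith) (fun s hs => congrArg ftil (holdThenRamp.of_le hs.2))
      (fun s _ => hnn _)

open MeasureTheory in
/-- Lower-bound construction (Case 1 of Theorem 5.3): the curve sitting at `r₀` and
then moving outward with speed `(r₀−(n−1))/r₀` to reach `r` at time `t` is admissible
and gives `∫₀ᵗ f̃(γ) ≥ f̃(r₀)(t − T₁)`. -/
theorem stmt_12 (n : ℕ) (hn : 2 ≤ n) (ftil : ℝ → ℝ)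
    (hf : Continuous ftil) (hnn : ∀ ρ, 0 ≤ ftil ρ)
    (rbar₀ r₀ r t : ℝ)
    (hrbar : (n : ℝ) - 1 ≤ rbar₀)
    (hmax : ∀ ρ, (n : ℝ) - 1 ≤ ρ → ftil ρ ≤ ftil rbar₀)
    (hr₀ : rbar₀ < r₀) (hr : r₀ < r)
    (ht : r₀ * (r - r₀) / (r₀ - ((n : ℝ) - 1)) < t) :
    let T₁ := r₀ * (r - r₀) / (r₀ - ((n : ℝ) - 1))
    let γ : ℝ → ℝ := fun s =>
      if s ≤ t - T₁ then r₀ else r₀ + (s - (t - T₁)) * ((r₀ - ((n : ℝ) - 1)) / r₀)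
    γ t = r ∧ (∀ s ∈ Set.Icc 0 t, 0 < γ s) ∧ ContinuousOn γ (Set.Icc 0 t) ∧
    (∀ᵐ s ∂(volume.restrict (Set.Icc 0 t)),
      ∃ d, HasDerivAt γ d s ∧ |d + ((n : ℝ) - 1) / γ s| ≤ 1) ∧
    ftil r₀ * (t - T₁) ≤ ∫ s in (0:ℝ)..t, ftil (γ s) :=
  stmt_12_general n hn ftil hf hnn rbar₀ r₀ r t hrbar hr₀ hr ht
end

section
/- Let f : ℝⁿ → ℝ be Lipschitz and let u solve u_t + F(Du,D²u) = f with u(·,0) = 0, where F does not depend on x and the comparison principle holds. Then for each t > 0 and all x₁, x₂ ∈ ℝⁿ, |u(x₁,t) − u(x₂,t)| ≤ ‖Df‖_∞ · t · |x₁ − x₂|. -/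
/-! Since the operator does not depend on `x`, the translate `u(· + y, ·)` solves the equation
with source `f(· + y) ≥ f − L‖y‖`, so `u(· + y, t) − L‖y‖t` is a subsolution for the source `f`
with zero initial data. Comparison with `u` gives `u(x + y, t) ≤ u(x, t) + L‖y‖t`, and exchanging
the roles of the two points gives the two-sided bound. -/

open NNReal

theorem le_add_mul_dist_of_comparison {E : Type*} [SeminormedAddCommGroup E]
    {f : E → ℝ} {K : ℝ≥0} (hf : LipschitzWith K f)
    (SubSol SuperSol : (E → ℝ) → (E → ℝ → ℝ) → Prop) {u : E → ℝ → ℝ}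
    (husup : SuperSol f u) (hinit : ∀ x, u x 0 = 0)
    (hcomp : ∀ g v w, SubSol g v → SuperSol g w → (∀ x, v x 0 ≤ w x 0) →
      ∀ x t, 0 ≤ t → v x t ≤ w x t)
    (htranslate : ∀ y, SubSol (fun x => f (x + y)) (fun x t => u (x + y) t))
    (hlin : ∀ g v (c : ℝ), SubSol g v → SubSol (fun x => g x + c) (fun x t => v x t + c * t))
    (hmono : ∀ g h v, SubSol g v → (∀ x, g x ≤ h x) → SubSol h v)
    {t : ℝ} (ht : 0 ≤ t) (x x' : E) :
    u x t ≤ u x' t + K * t * dist x x' := by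
  have hsource : ∀ z, f (z + (x - x')) + -(K * dist x x') ≤ f z := fun z => by
    have := hf.le_add_mul (z + (x - x')) z
    rw [dist_self_add_left, ← dist_eq_norm] at this
    linarith
  have hsub : SubSol f (fun z s => u (z + (x - x')) s + -(K * dist x x') * s) :=
    hmono _ _ _ (hlin _ _ _ (htranslate (x - x'))) hsource
  have hle := hcomp f _ u hsub husup (by simp [hinit]) x' t ht
  rw [add_sub_cancel] at hle
  linarith

theorem stmt_15_general {n : ℕ} (f : EuclideanSpace ℝ (Fin n) → ℝ) (L : ℝ) (hL : 0 ≤ L)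
    (hf : LipschitzWith (Real.toNNReal L) f)
    (SubSol SuperSol : (EuclideanSpace ℝ (Fin n) → ℝ) →
      (EuclideanSpace ℝ (Fin n) → ℝ → ℝ) → Prop)
    (u : EuclideanSpace ℝ (Fin n) → ℝ → ℝ)
    (husup : SuperSol f u) (hinit : ∀ x, u x 0 = 0)
    (hcomp : ∀ g v w, SubSol g v → SuperSol g w → (∀ x, v x 0 ≤ w x 0) →
      ∀ x t, 0 ≤ t → v x t ≤ w x t)
    (htranslate : ∀ y, SubSol (fun x => f (x + y)) (fun x t => u (x + y) t) ∧
      SuperSol (fun x => f (x + y)) (fun x t => u (x + y) t))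
    (hlinSub : ∀ g v (c : ℝ),
      SubSol g v → SubSol (fun x => g x + c) (fun x t => v x t + c * t))
    (hmonoSub : ∀ (g h : EuclideanSpace ℝ (Fin n) → ℝ) v,
      SubSol g v → (∀ x, g x ≤ h x) → SubSol h v) :
    ∀ t, 0 ≤ t → ∀ x₁ x₂, |u x₁ t - u x₂ t| ≤ L * t * ‖x₁ - x₂‖ := by
  intro t ht x₁ x₂
  have hbound := le_add_mul_dist_of_comparison hf SubSol SuperSol husup hinit hcomp
    (fun y => (htranslate y).1) hlinSub hmonoSub ht
  rw [Real.coe_toNNReal L hL] at hbound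
  rw [abs_sub_le_iff, ← dist_eq_norm]
  constructor
  · linarith [hbound x₁ x₂]
  · linarith [dist_comm x₂ x₁ ▸ hbound x₂ x₁]

/-- Proposition 3.4 (abstract form): for `u_t + F(Du,D²u) = f` with Lipschitz `f`,
`u(·,0) = 0`, an `x`-independent operator (translation invariance) and the comparison
principle, `|u(x₁,t) − u(x₂,t)| ≤ ‖Df‖_∞ · t · |x₁ − x₂|`. -/
theorem stmt_15 {n : ℕ} (f : EuclideanSpace ℝ (Fin n) → ℝ) (L : ℝ) (hL : 0 ≤ L)
    (hf : LipschitzWith (Real.toNNReal L) f)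
    (SubSol SuperSol : (EuclideanSpace ℝ (Fin n) → ℝ) →
      (EuclideanSpace ℝ (Fin n) → ℝ → ℝ) → Prop)
    (u : EuclideanSpace ℝ (Fin n) → ℝ → ℝ)
    (husub : SubSol f u) (husup : SuperSol f u) (hinit : ∀ x, u x 0 = 0)
    (hcomp : ∀ g v w, SubSol g v → SuperSol g w → (∀ x, v x 0 ≤ w x 0) →
      ∀ x t, 0 ≤ t → v x t ≤ w x t)
    (htranslate : ∀ y, SubSol (fun x => f (x + y)) (fun x t => u (x + y) t) ∧
      SuperSol (fun x => f (x + y)) (fun x t => u (x + y) t))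
    (hlinSub : ∀ g v (c : ℝ),
      SubSol g v → SubSol (fun x => g x + c) (fun x t => v x t + c * t))
    (hlinSup : ∀ g v (c : ℝ),
      SuperSol g v → SuperSol (fun x => g x + c) (fun x t => v x t + c * t))
    (hmonoSub : ∀ (g h : EuclideanSpace ℝ (Fin n) → ℝ) v,
      SubSol g v → (∀ x, g x ≤ h x) → SubSol h v)
    (hmonoSup : ∀ (g h : EuclideanSpace ℝ (Fin n) → ℝ) v,
      SuperSol g v → (∀ x, h x ≤ g x) → SuperSol h v) :
    ∀ t, 0 ≤ t → ∀ x₁ x₂, |u x₁ t - u x₂ t| ≤ L * t * ‖x₁ - x₂‖ :=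
  stmt_15_general f L hL hf SubSol SuperSol u husup hinit hcomp htranslate hlinSub hmonoSub
end
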